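/- For all i, j, k ∈ {1,…,4}, the vertical Cartan coefficient C_{i(1)}^{j(k)} := −Σ_{r=1}^{4} (g_{ir}/2) ( ∂g^{jr}/∂p_k + ∂g^{kr}/∂p_j − ∂g^{jk}/∂p_r ) equals 𝖢_i^{jk} · p_i/(p_j p_k) (no summation on the right-hand side), where 𝖢_i^{jk} := (1 − 2δ^{jk} − 2δ^j_i − 2δ^k_i + 8δ^j_i δ^k_i)/8; explicitly 𝖢_i^{jk} = 1/8 if i, j, k are pairwise distinct, −1/8 if exactly two of i, j, k coincide, and 3/8 if i = j = k. -/

import Mathlib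

/-- Partial derivative of `f : (Fin 4 → ℝ) → ℝ` with respect to the `i`-th coordinate. -/
noncomputable def pd (f : (Fin 4 → ℝ) → ℝ) (i : Fin 4) (v : Fin 4 → ℝ) : ℝ :=
  deriv (fun s => f (Function.update v i s)) (v i)

/-- Kronecker delta. -/
noncomputable def kron (i j : Fin 4) : ℝ := if i = j then 1 else 0

/-- The contravariant metrical d-tensor `g^{ij} = (e^{-2σ(x)}(1-2δ^{ij})/2) 𝒫^{1/2}/(p_i p_j)`. -/
noncomputable def gup (σ : (Fin 4 → ℝ) → ℝ) (x p : Fin 4 → ℝ) (i j : Fin 4) : ℝ :=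
  Real.exp (-2 * σ x) * (1 - 2 * kron i j) / 2 * Real.sqrt (∏ m, p m) / (p i * p j)

/-- The covariant metrical d-tensor `g_{jk} = (e^{2σ(x)}(1-2δ_{jk})/2) p_j p_k 𝒫^{-1/2}`. -/
noncomputable def gdown (σ : (Fin 4 → ℝ) → ℝ) (x p : Fin 4 → ℝ) (j k : Fin 4) : ℝ :=
  Real.exp (2 * σ x) * (1 - 2 * kron j k) / 2 * p j * p k / Real.sqrt (∏ m, p m)

/-- `𝖢_i^{jk} = (1 − 2δ^{jk} − 2δ^j_i − 2δ^k_i + 8δ^j_i δ^k_i)/8`. -/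
noncomputable def CC (i j k : Fin 4) : ℝ :=
  (1 - 2 * kron j k - 2 * kron i j - 2 * kron i k + 8 * kron i j * kron i k) / 8

lemma kron_comm (a b : Fin 4) : kron a b = kron b a := by
  simp [kron, eq_comm]

lemma pd_gup (σ : (Fin 4 → ℝ) → ℝ) (x p : Fin 4 → ℝ) (hp : ∀ i, 0 < p i) (a b c : Fin 4) :
    pd (fun p' => gup σ x p' a b) c p
      = gup σ x p a b * (1 - 2 * kron a c - 2 * kron b c) / (2 * p c) := by
  set C : ℝ := Real.exp (-2 * σ x) * (1 - 2 * kron a b) / 2 with hC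
  set Q : ℝ := ∏ m ∈ Finset.univ.erase c, p m with hQdef
  have hQ : 0 < Q := Finset.prod_pos (fun m _ => hp m)
  have hPQ : (∏ m, p m) = p c * Q := (Finset.mul_prod_erase Finset.univ p (Finset.mem_univ c)).symm
  have hu : ∀ d : Fin 4, HasDerivAt (fun s : ℝ => Function.update p c s d) (kron d c) (p c) := by
    intro d
    by_cases hd : d = c
    · subst hd
      simp only [Function.update_self, kron, if_pos rfl]
      exact hasDerivAt_id _
    · simp only [Function.update_of_ne hd, kron, if_neg hd]
      exact hasDerivAt_const _ _
  have hsq : HasDerivAt (fun s : ℝ => Real.sqrt (s * Q))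
      (1 / (2 * Real.sqrt (p c * Q)) * Q) (p c) := by
    have h1 : HasDerivAt (fun s : ℝ => s * Q) Q (p c) := by
      simpa using (hasDerivAt_id (p c)).mul_const Q
    exact (Real.hasDerivAt_sqrt (mul_pos (hp c) hQ).ne').comp (p c) h1
  have hne : Function.update p c (p c) a * Function.update p c (p c) b ≠ 0 := by
    rw [Function.update_eq_self]
    exact (mul_pos (hp a) (hp b)).ne'
  have hf : HasDerivAt
      (fun s : ℝ => C * Real.sqrt (s * Q) / (Function.update p c s a * Function.update p c s b))
      ((C * (1 / (2 * Real.sqrt (p c * Q)) * Q) * (Function.update p c (p c) a * Function.update p c (p c) b)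
        - C * Real.sqrt (p c * Q) * (kron a c * Function.update p c (p c) b + Function.update p c (p c) a * kron b c))
        / (Function.update p c (p c) a * Function.update p c (p c) b) ^ 2) (p c) :=
    (hsq.const_mul C).div ((hu a).mul (hu b)) hne
  have heq : (fun s : ℝ => gup σ x (Function.update p c s) a b)
      = (fun s : ℝ => C * Real.sqrt (s * Q) / (Function.update p c s a * Function.update p c s b)) := by
    funext s
    simp only [gup, hC]
    rw [Finset.prod_update_of_mem (Finset.mem_univ c), Finset.sdiff_singleton_eq_erase]
  have hderiv : pd (fun p' => gup σ x p' a b) c p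
      = (C * (1 / (2 * Real.sqrt (p c * Q)) * Q) * (p a * p b)
        - C * Real.sqrt (p c * Q) * (kron a c * p b + p a * kron b c)) / (p a * p b) ^ 2 := by
    rw [pd, heq, hf.deriv, Function.update_eq_self]
  rw [hderiv]
  simp only [gup, hPQ, hC]
  set t := Real.sqrt (p c * Q) with htdef
  have hs : t * t = p c * Q := Real.mul_self_sqrt (mul_pos (hp c) hQ).le
  have htne : t ≠ 0 := (Real.sqrt_pos.2 (mul_pos (hp c) hQ)).ne'
  have hka : kron a c * p a = kron a c * p c := by
    rcases eq_or_ne a c with h | h <;> simp [kron, h]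
  have hkb : kron b c * p b = kron b c * p c := by
    rcases eq_or_ne b c with h | h <;> simp [kron, h]
  have hane := (hp a).ne'
  have hbne := (hp b).ne'
  have hcne := (hp c).ne'
  field_simp
  linear_combination
    ((1 - 2 * kron a b) * (-2 * p c * (p b * kron a c + p a * kron b c)
      - p a * p b * (1 - 2 * kron a c - 2 * kron b c))) * hs
    + (2 * p c * Q * (1 - 2 * kron a b) * p b) * hka
    + (2 * p c * Q * (1 - 2 * kron a b) * p a) * hkb

lemma gdown_mul_gup (σ : (Fin 4 → ℝ) → ℝ) (x p : Fin 4 → ℝ) (hp : ∀ i, 0 < p i)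
    (a b c d : Fin 4) :
    gdown σ x p a b * gup σ x p c d
      = (1 - 2 * kron a b) * (1 - 2 * kron c d) / 4 * (p a * p b) / (p c * p d) := by
  have hP : (0:ℝ) < ∏ m, p m := Finset.prod_pos (fun m _ => hp m)
  have hsne : Real.sqrt (∏ m, p m) ≠ 0 := (Real.sqrt_pos.2 hP).ne'
  simp only [gdown, gup]
  rw [show (-2 : ℝ) * σ x = -(2 * σ x) by ring, Real.exp_neg]
  have hcne := (hp c).ne'
  have hdne := (hp d).ne'
  field_simp [Real.exp_ne_zero]
  ring

lemma term_eq (σ : (Fin 4 → ℝ) → ℝ) (x p : Fin 4 → ℝ) (hp : ∀ i, 0 < p i)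
    (i j k r : Fin 4) :
    gdown σ x p i r / 2 *
        (pd (fun p' => gup σ x p' j r) k p + pd (fun p' => gup σ x p' k r) j p
          - pd (fun p' => gup σ x p' j k) r p)
      = (1 - 2 * kron i r) *
          (1 - 2 * kron j r - 2 * kron k r - 2 * kron j k + 8 * kron j r * kron k r) / 16
          * (p i / (p j * p k)) := by
  have hne : ∀ m, p m ≠ 0 := fun m => (hp m).ne'
  have e1 : gdown σ x p i r * gup σ x p j r
      = (1 - 2 * kron i r) * (1 - 2 * kron j r) / 4 * (p i / p j) := by
    rw [gdown_mul_gup σ x p hp, kron_comm j r]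
    field_simp [hne j, hne r]
  have e2 : gdown σ x p i r * gup σ x p k r
      = (1 - 2 * kron i r) * (1 - 2 * kron k r) / 4 * (p i / p k) := by
    rw [gdown_mul_gup σ x p hp, kron_comm k r]
    field_simp [hne k, hne r]
  have e3 : gdown σ x p i r * gup σ x p j k * (1 / p r)
      = (1 - 2 * kron i r) * (1 - 2 * kron j k) / 4 * (p i / (p j * p k)) := by
    rw [gdown_mul_gup σ x p hp]
    field_simp [hne j, hne k, hne r]
  rw [pd_gup σ x p hp, pd_gup σ x p hp, pd_gup σ x p hp,
    kron_comm k j, kron_comm r j, kron_comm r k]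
  linear_combination ((1 - 2 * kron j k - 2 * kron k r) / (4 * p k)) * e1
    + ((1 - 2 * kron j k - 2 * kron j r) / (4 * p j)) * e2
    - ((1 - 2 * kron j r - 2 * kron k r) / 4) * e3

lemma kron_sum1 (a : Fin 4) : kron a 0 + kron a 1 + kron a 2 + kron a 3 = 1 := by
  fin_cases a <;> simp (config := { decide := true }) [kron]

lemma kron_sum2 (a b : Fin 4) :
    kron a 0 * kron b 0 + kron a 1 * kron b 1 + kron a 2 * kron b 2 + kron a 3 * kron b 3
      = kron a b := by
  fin_cases a <;> fin_cases b <;> simp (config := { decide := true }) [kron]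

lemma kron_sum3 (a b c : Fin 4) :
    kron a 0 * kron b 0 * kron c 0 + kron a 1 * kron b 1 * kron c 1
      + kron a 2 * kron b 2 * kron c 2 + kron a 3 * kron b 3 * kron c 3
      = kron a b * kron a c := by
  fin_cases a <;> fin_cases b <;> fin_cases c <;> simp (config := { decide := true }) [kron]

/-- the vertical Cartan coefficient
`C_{i(1)}^{j(k)} = −Σ_r (g_{ir}/2)(∂g^{jr}/∂p_k + ∂g^{kr}/∂p_j − ∂g^{jk}/∂p_r)`
equals `𝖢_i^{jk} p_i/(p_j p_k)`, with the explicit values `1/8`, `−1/8`, `3/8`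
of `𝖢_i^{jk}` according to coincidences among `i, j, k`. -/
theorem stmt_5 (σ : (Fin 4 → ℝ) → ℝ) (hσ : ContDiff ℝ (⊤ : ℕ∞) σ)
    (x p : Fin 4 → ℝ) (hp : ∀ i, 0 < p i) (i j k : Fin 4) :
    (-(∑ r, (gdown σ x p i r / 2) *
        (pd (fun p' => gup σ x p' j r) k p + pd (fun p' => gup σ x p' k r) j p
          - pd (fun p' => gup σ x p' j k) r p))
      = CC i j k * p i / (p j * p k))
    ∧ (i ≠ j → j ≠ k → i ≠ k → CC i j k = 1 / 8)
    ∧ ((i = j ∧ j ≠ k) ∨ (i = k ∧ i ≠ j) ∨ (j = k ∧ i ≠ j) → CC i j k = -(1 / 8))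
    ∧ (i = j → j = k → CC i j k = 3 / 8) := by
  refine ⟨?_, ?_, ?_, ?_⟩
  · simp only [term_eq σ x p hp]
    rw [Fin.sum_univ_four]
    simp only [CC]
    linear_combination (p i / (p j * p k) / 8) * kron_sum1 j
      + (p i / (p j * p k) / 8) * kron_sum1 k
      + (p i / (p j * p k) / 8 - p i / (p j * p k) * kron j k / 4) * kron_sum1 i
      - (p i / (p j * p k) / 2) * kron_sum2 j k
      - (p i / (p j * p k) / 4) * kron_sum2 i j
      - (p i / (p j * p k) / 4) * kron_sum2 i k
      + (p i / (p j * p k)) * kron_sum3 i j k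
  · intro h1 h2 h3
    simp [CC, kron, h1, h2, h3]
  · rintro (⟨h1, h2⟩ | ⟨h1, h2⟩ | ⟨h1, h2⟩)
    · subst h1; simp [CC, kron, h2]; ring
    · subst h1; simp [CC, kron, h2, Ne.symm h2]; ring
    · subst h1; simp [CC, kron, h2]; ring
  · intro h1 h2
    subst h1; subst h2
    simp [CC, kron]; ring
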